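/- arXiv:1807.08130 — 2 statements merged into one kernel-verified Lean document; each statement's English description precedes it below -/
import Mathlib

section
/- For every (s,x,w) ∈ 𝒟 with (√2/2)(s − w) < min{w, x, T − s}, one has −(c + λ(w))·V̄(s,x,w) + p − N₁ + λ(w)·∫₀ˣ V̄(s, x−u, 0) dG(u) ≤ p − N₁ < 0. -/
open MeasureTheory

/-- The open domain `𝒟 = {(s,x,w) : 0 < s < T, x > 0, 0 < w < s}`. -/
def Dint (T : ℝ) : Set (ℝ × ℝ × ℝ) :=
  {q | 0 < q.1 ∧ q.1 < T ∧ 0 < q.2.1 ∧ 0 < q.2.2 ∧ q.2.2 < q.1}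

/-- The distance-like function `d(s,x,w) = min{T - s, w, (√2/2)(s-w), x}`. -/
noncomputable def dD (T s x w : ℝ) : ℝ :=
  min (T - s) (min w (min (Real.sqrt 2 / 2 * (s - w)) x))

/-- The supersolution candidate `V̄(s,x,w) = x + d(s,x,w) + N₁(T-s)`,
`N₁ = √2/2 + 1 + 2p`. -/
noncomputable def Vbar (T p s x w : ℝ) : ℝ :=
  x + dD T s x w + (Real.sqrt 2 / 2 + 1 + 2 * p) * (T - s)

/-! On `𝒟` the correction `d` is nonnegative, so `V̄(s,x,w) ≥ x + N₁(T-s)`, whereas at `w = 0`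
it vanishes, so the integrand `V̄(s,x-u,0) = x - u + N₁(T-s)` lies in `[0, x + N₁(T-s)]` for
`u ∈ [0,x]`. As `G` has total mass one, the jump term is at most `λ(w)(x + N₁(T-s))`, and the
left-hand side is at most `p - N₁ - c(x + N₁(T-s)) ≤ p - N₁ = -(√2/2 + 1 + p) < 0`. -/

theorem setIntegral_le_of_norm_le_const {α : Type*} [MeasurableSpace α] {μ : Measure α}
    [IsZeroOrProbabilityMeasure μ] {s : Set α} {f : α → ℝ} {C : ℝ} (hC : 0 ≤ C)
    (hf : ∀ x ∈ s, ‖f x‖ ≤ C) : ∫ x in s, f x ∂μ ≤ C :=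
  calc ∫ x in s, f x ∂μ ≤ ‖∫ x in s, f x ∂μ‖ := Real.le_norm_self _
    _ ≤ C * μ.real s := norm_setIntegral_le_of_norm_le_const (measure_lt_top _ _) hf
    _ ≤ C * 1 := by gcongr; exact measureReal_le_one
    _ = C := mul_one C

theorem dD_nonneg_of_mem_Dint {T s x w : ℝ} (h : (s, x, w) ∈ Dint T) : 0 ≤ dD T s x w := by
  obtain ⟨-, hsT, hx, hw, hws⟩ := h
  have hsqrt : 0 ≤ Real.sqrt 2 / 2 := by positivity
  exact le_min (by linarith) (le_min hw.le (le_min (mul_nonneg hsqrt (by linarith)) hx.le))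

theorem dD_of_w_zero {T s x : ℝ} (hs : 0 ≤ s) (hsT : s ≤ T) (hx : 0 ≤ x) : dD T s x 0 = 0 := by
  have hsqrt : 0 ≤ Real.sqrt 2 / 2 := by positivity
  simp only [dD, sub_zero, min_eq_left (le_min (mul_nonneg hsqrt hs) hx),
    min_eq_right (sub_nonneg.2 hsT)]

theorem Vbar_of_w_zero {T p s x : ℝ} (hs : 0 ≤ s) (hsT : s ≤ T) (hx : 0 ≤ x) :
    Vbar T p s x 0 = x + (Real.sqrt 2 / 2 + 1 + 2 * p) * (T - s) := by
  rw [Vbar, dD_of_w_zero hs hsT hx, add_zero]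

theorem le_Vbar_of_mem_Dint {T p s x w : ℝ} (h : (s, x, w) ∈ Dint T) :
    x + (Real.sqrt 2 / 2 + 1 + 2 * p) * (T - s) ≤ Vbar T p s x w := by
  have := dD_nonneg_of_mem_Dint h
  rw [Vbar]
  linarith

theorem setIntegral_Vbar_of_w_zero_le {T p s x : ℝ} {μ : Measure ℝ} [IsZeroOrProbabilityMeasure μ]
    (hp : 0 ≤ p) (hs : 0 ≤ s) (hsT : s ≤ T) (hx : 0 ≤ x) :
    ∫ u in Set.Icc 0 x, Vbar T p s (x - u) 0 ∂μ ≤ x + (Real.sqrt 2 / 2 + 1 + 2 * p) * (T - s) := by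
  have hN : 0 ≤ (Real.sqrt 2 / 2 + 1 + 2 * p) * (T - s) :=
    mul_nonneg (by positivity) (sub_nonneg.2 hsT)
  refine setIntegral_le_of_norm_le_const (by linarith) fun u ⟨hu, hux⟩ => ?_
  rw [Vbar_of_w_zero hs hsT (sub_nonneg.2 hux), Real.norm_of_nonneg (by linarith)]
  linarith

theorem stmt7_general (T c p Λ : ℝ) (hc : 0 < c) (hp : 0 < p)
    (lam : ℝ → ℝ)
    (hlam : ∀ w ∈ Set.Icc (0 : ℝ) T, 0 < lam w ∧ lam w ≤ Λ)
    (G : StieltjesFunction ℝ)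
    (hGprob : IsProbabilityMeasure G.measure)
    (s x w : ℝ) (hmem : (s, x, w) ∈ Dint T) :
    (-(c + lam w) * Vbar T p s x w + p - (Real.sqrt 2 / 2 + 1 + 2 * p) +
        lam w * ∫ u in Set.Icc (0 : ℝ) x, Vbar T p s (x - u) 0 ∂G.measure)
      ≤ p - (Real.sqrt 2 / 2 + 1 + 2 * p) ∧
    p - (Real.sqrt 2 / 2 + 1 + 2 * p) < 0 := by
  have hV := le_Vbar_of_mem_Dint (p := p) hmem
  obtain ⟨hs, hsT, hx, hw, hws⟩ := hmem
  have hlam_nonneg : 0 ≤ lam w := (hlam w ⟨hw.le, (hws.trans hsT).le⟩).1.le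
  have hI := setIntegral_Vbar_of_w_zero_le (μ := G.measure) hp.le hs.le hsT.le hx.le
  have hN : 0 ≤ x + (Real.sqrt 2 / 2 + 1 + 2 * p) * (T - s) :=
    add_nonneg hx.le (mul_nonneg (by positivity) (sub_nonneg.2 hsT.le))
  have hjump := mul_le_mul_of_nonneg_left (hI.trans hV) hlam_nonneg
  have hdiscount := mul_nonneg hc.le (hN.trans hV)
  constructor
  · linarith
  · linarith [Real.sqrt_nonneg 2]

/-- For every `(s,x,w) ∈ 𝒟` with `(√2/2)(s-w) < min{w, x, T-s}`, one has
`-(c+λ(w))·V̄(s,x,w) + p - N₁ + λ(w)·∫₀ˣ V̄(s,x-u,0) dG(u) ≤ p - N₁ < 0`. -/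
theorem stmt7 (T c p Λ : ℝ) (hT : 0 < T) (hc : 0 < c) (hp : 0 < p) (hΛ : 0 < Λ)
    (lam : ℝ → ℝ) (hlamc : ContinuousOn lam (Set.Icc 0 T))
    (hlam : ∀ w ∈ Set.Icc (0 : ℝ) T, 0 < lam w ∧ lam w ≤ Λ)
    (G : StieltjesFunction ℝ) (hGc : Continuous G)
    (hGprob : IsProbabilityMeasure G.measure) (hGsupp : G.measure (Set.Iio 0) = 0)
    (s x w : ℝ) (hmem : (s, x, w) ∈ Dint T)
    (hactive : Real.sqrt 2 / 2 * (s - w) < min w (min x (T - s))) :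
    (-(c + lam w) * Vbar T p s x w + p - (Real.sqrt 2 / 2 + 1 + 2 * p) +
        lam w * ∫ u in Set.Icc (0 : ℝ) x, Vbar T p s (x - u) 0 ∂G.measure)
      ≤ p - (Real.sqrt 2 / 2 + 1 + 2 * p) ∧
    p - (Real.sqrt 2 / 2 + 1 + 2 * p) < 0 :=
  stmt7_general T c p Λ hc hp lam hlam G hGprob s x w hmem
end

section
/- For every (s,x,w) ∈ 𝒟 with x < min{T − s, w, (√2/2)(s − w)}, one has −(c + λ(w))·V̲(s,x,w) + N₂ + 2p + λ(w)·∫₀ˣ V̲(s, x−u, 0) dG(u) ≥ −(c + λ(w))·2T/(2+√2) + N₂ + 2p > 0. -/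
/-!
Where `x` is the smallest of the four quantities defining `d`, `V̲(s,x,w) = 2x - N₂(T-s)`; on the
face `w = 0` the function `d` vanishes, so `V̲(s,x-u,0) ≥ -N₂(T-s)` for `u ∈ [0,x]` and, `G` being
a probability measure, the integral is at least `-N₂(T-s)` too. The `N₂(T-s)` terms then cancel up
to `c·N₂(T-s) ≥ 0`, and `x < min{T-s, w, (√2/2)(s-w)}` gives `(2+√2)x < T`, i.e.
`2x < 2T/(2+√2)`. The lower bound is positive because
`N₂ - (c+λ)·2T/(2+√2) = √2/2 + 1 + (Λ-λ)·2T/(2+√2)` with `λ ≤ Λ`.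
-/

open MeasureTheory

/-- The subsolution candidate `V̲(s,x,w) = x + d(s,x,w) - N₂(T-s)`,
`N₂ = √2/2 + 1 + (c+Λ)·2T/(2+√2)`. -/
noncomputable def Vlow (T c Λ s x w : ℝ) : ℝ :=
  x + dD T s x w - (Real.sqrt 2 / 2 + 1 + (c + Λ) * (2 * T) / (2 + Real.sqrt 2)) * (T - s)

noncomputable def N₂ (T c Λ : ℝ) : ℝ :=
  Real.sqrt 2 / 2 + 1 + (c + Λ) * (2 * T) / (2 + Real.sqrt 2)

theorem N₂_def (T c Λ : ℝ) :
    N₂ T c Λ = Real.sqrt 2 / 2 + 1 + (c + Λ) * (2 * T) / (2 + Real.sqrt 2) := rfl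

theorem Vlow_eq (T c Λ s x w : ℝ) : Vlow T c Λ s x w = x + dD T s x w - N₂ T c Λ * (T - s) :=
  rfl

theorem N₂_nonneg {T c Λ : ℝ} (hT : 0 ≤ T) (hcΛ : 0 ≤ c + Λ) : 0 ≤ N₂ T c Λ := by
  rw [N₂_def]
  positivity

theorem neg_mul_div_add_N₂_pos {T c Λ l : ℝ} (hT : 0 ≤ T) (hl : l ≤ Λ) :
    0 < -(c + l) * (2 * T) / (2 + Real.sqrt 2) + N₂ T c Λ := by
  have hr : 0 ≤ (Λ - l) * (2 * T) / (2 + Real.sqrt 2) :=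
    div_nonneg (mul_nonneg (by linarith) (by linarith)) (by positivity)
  have hsplit : -(c + l) * (2 * T) / (2 + Real.sqrt 2) + N₂ T c Λ =
      Real.sqrt 2 / 2 + 1 + (Λ - l) * (2 * T) / (2 + Real.sqrt 2) := by
    rw [N₂_def]; ring
  rw [hsplit]
  positivity

theorem dD_of_le {T s x w : ℝ} (hT : x ≤ T - s) (hw : x ≤ w)
    (hsw : x ≤ Real.sqrt 2 / 2 * (s - w)) : dD T s x w = x := by
  rw [dD, min_eq_right hsw, min_eq_right hw, min_eq_right hT]

theorem dD_zero_right {T s y : ℝ} (hs : 0 ≤ s) (hsT : s ≤ T) (hy : 0 ≤ y) : dD T s y 0 = 0 := by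
  have hmin : 0 ≤ min (Real.sqrt 2 / 2 * (s - 0)) y := le_min (by positivity) hy
  rw [dD, min_eq_left hmin, min_eq_right (sub_nonneg.mpr hsT)]

theorem two_mul_le_of_le_min {T s x w : ℝ} (hT : x ≤ T - s) (hw : x ≤ w)
    (hsw : x ≤ Real.sqrt 2 / 2 * (s - w)) : 2 * x ≤ 2 * T / (2 + Real.sqrt 2) := by
  have h2 : Real.sqrt 2 * Real.sqrt 2 = 2 := Real.mul_self_sqrt zero_le_two
  have hsqrt : Real.sqrt 2 * x ≤ s - w :=
    calc Real.sqrt 2 * x ≤ Real.sqrt 2 * (Real.sqrt 2 / 2 * (s - w)) :=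
          mul_le_mul_of_nonneg_left hsw (Real.sqrt_nonneg 2)
      _ = s - w := by linear_combination (s - w) / 2 * h2
  rw [le_div_iff₀ (by positivity)]
  nlinarith

theorem neg_le_setIntegral_of_forall_neg_le {α : Type*} [MeasurableSpace α] {μ : Measure α}
    [IsZeroOrProbabilityMeasure μ] {S : Set α} (hS : MeasurableSet S) {f : α → ℝ} {K : ℝ}
    (hK : 0 ≤ K) (hf : ∀ u ∈ S, -K ≤ f u) : -K ≤ ∫ u in S, f u ∂μ := by
  by_cases hint : IntegrableOn f S μ
  · calc -K ≤ -K * μ.real S := by nlinarith [measureReal_le_one (μ := μ) (s := S)]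
      _ ≤ ∫ u in S, f u ∂μ := setIntegral_ge_of_const_le_real hS (measure_ne_top _ _) hf hint
  · rw [integral_undef hint]
    linarith

theorem neg_le_setIntegral_Vlow_zero {T c Λ s : ℝ} {μ : Measure ℝ} [IsZeroOrProbabilityMeasure μ]
    (hs : 0 ≤ s) (hsT : s ≤ T) (hcΛ : 0 ≤ c + Λ) (x : ℝ) :
    -(N₂ T c Λ * (T - s)) ≤ ∫ u in Set.Icc 0 x, Vlow T c Λ s (x - u) 0 ∂μ := by
  refine neg_le_setIntegral_of_forall_neg_le measurableSet_Icc
    (mul_nonneg (N₂_nonneg (hs.trans hsT) hcΛ) (sub_nonneg.mpr hsT)) fun u hu ↦ ?_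
  rw [Vlow_eq, dD_zero_right hs hsT (sub_nonneg.mpr hu.2)]
  linarith [hu.2]

theorem stmt8_general (T c p Λ : ℝ) (hc : 0 < c) (hp : 0 < p)
    (lam : ℝ → ℝ)
    (hlam : ∀ w ∈ Set.Icc (0 : ℝ) T, 0 < lam w ∧ lam w ≤ Λ)
    (G : StieltjesFunction ℝ)
    (hGprob : IsProbabilityMeasure G.measure)
    (s x w : ℝ) (hmem : (s, x, w) ∈ Dint T)
    (hactive : x < min (T - s) (min w (Real.sqrt 2 / 2 * (s - w)))) :
    (-(c + lam w) * (2 * T) / (2 + Real.sqrt 2) +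
        (Real.sqrt 2 / 2 + 1 + (c + Λ) * (2 * T) / (2 + Real.sqrt 2)) + 2 * p)
      ≤ (-(c + lam w) * Vlow T c Λ s x w +
        (Real.sqrt 2 / 2 + 1 + (c + Λ) * (2 * T) / (2 + Real.sqrt 2)) + 2 * p +
        lam w * ∫ u in Set.Icc (0 : ℝ) x, Vlow T c Λ s (x - u) 0 ∂G.measure) ∧
    0 < (-(c + lam w) * (2 * T) / (2 + Real.sqrt 2) +
        (Real.sqrt 2 / 2 + 1 + (c + Λ) * (2 * T) / (2 + Real.sqrt 2)) + 2 * p) := by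
  obtain ⟨hs0, hsT, -, hw0, hws⟩ := hmem
  obtain ⟨hxT, hxw, hxsw⟩ : x < T - s ∧ x < w ∧ x < Real.sqrt 2 / 2 * (s - w) := by
    simpa only [lt_min_iff] using hactive
  obtain ⟨hl0, hlΛ⟩ := hlam w ⟨hw0.le, (hws.trans hsT).le⟩
  have hcΛ : 0 ≤ c + Λ := by linarith
  have hV : Vlow T c Λ s x w = 2 * x - N₂ T c Λ * (T - s) := by
    rw [Vlow_eq, dD_of_le hxT.le hxw.le hxsw.le]; ring
  have hI := neg_le_setIntegral_Vlow_zero (μ := G.measure) hs0.le hsT.le hcΛ x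
  have hx := two_mul_le_of_le_min hxT.le hxw.le hxsw.le
  have hN := N₂_nonneg (hs0.trans hsT).le hcΛ
  have hpos := neg_mul_div_add_N₂_pos (c := c) (hs0.trans hsT).le hlΛ
  have hdiv : -(c + lam w) * (2 * T) / (2 + Real.sqrt 2) =
      -((c + lam w) * (2 * T / (2 + Real.sqrt 2))) := by ring
  rw [← N₂_def]
  refine ⟨?_, by linarith⟩
  rw [hV, hdiv]
  linarith [mul_le_mul_of_nonneg_left hx (by linarith : 0 ≤ c + lam w),
    mul_nonneg hc.le (mul_nonneg hN (by linarith : 0 ≤ T - s)),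
    mul_le_mul_of_nonneg_left hI hl0.le]

/-- For every `(s,x,w) ∈ 𝒟` with `x < min{T-s, w, (√2/2)(s-w)}`, one has
`-(c+λ(w))·V̲(s,x,w) + N₂ + 2p + λ(w)·∫₀ˣ V̲(s,x-u,0) dG(u)
  ≥ -(c+λ(w))·2T/(2+√2) + N₂ + 2p > 0`. -/
theorem stmt8 (T c p Λ : ℝ) (hT : 0 < T) (hc : 0 < c) (hp : 0 < p) (hΛ : 0 < Λ)
    (lam : ℝ → ℝ) (hlamc : ContinuousOn lam (Set.Icc 0 T))
    (hlam : ∀ w ∈ Set.Icc (0 : ℝ) T, 0 < lam w ∧ lam w ≤ Λ)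
    (G : StieltjesFunction ℝ) (hGc : Continuous G)
    (hGprob : IsProbabilityMeasure G.measure) (hGsupp : G.measure (Set.Iio 0) = 0)
    (s x w : ℝ) (hmem : (s, x, w) ∈ Dint T)
    (hactive : x < min (T - s) (min w (Real.sqrt 2 / 2 * (s - w)))) :
    (-(c + lam w) * (2 * T) / (2 + Real.sqrt 2) +
        (Real.sqrt 2 / 2 + 1 + (c + Λ) * (2 * T) / (2 + Real.sqrt 2)) + 2 * p)
      ≤ (-(c + lam w) * Vlow T c Λ s x w +
        (Real.sqrt 2 / 2 + 1 + (c + Λ) * (2 * T) / (2 + Real.sqrt 2)) + 2 * p +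
        lam w * ∫ u in Set.Icc (0 : ℝ) x, Vlow T c Λ s (x - u) 0 ∂G.measure) ∧
    0 < (-(c + lam w) * (2 * T) / (2 + Real.sqrt 2) +
        (Real.sqrt 2 / 2 + 1 + (c + Λ) * (2 * T) / (2 + Real.sqrt 2)) + 2 * p) :=
  stmt8_general T c p Λ hc hp lam hlam G hGprob s x w hmem hactive
end
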